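/- Let k be an even natural number and let Q_L, Q_R ∈ ℍ_ℂ be complex quaternions all of whose four components are real and which have unit norm. Fix I,J ∈ {0,…,k} and set 𝒜 := ⟨(Q_L a Q_R)·n_IJ⟩, 𝒜' := ⟨(Q_L ā Q_R)·n_IJ⟩, ℬ := ⟨(Q_L b Q_R)·n_IJ⟩; assume 𝒜' ≠ 0 and ℬ ≠ 0, and set 𝒰 := ℬ/𝒜', 𝒱 := 𝒜/ℬ. Define, for i,j ∈ {0,…,k}, G^{ij} := ((𝒜')^k/(k+1)²) ∑_{A=0}^{k} ∑_{B=0}^{k} ρ^{−i(A+B−k)} ρ^{−j(A−B)} 𝒰^A 𝒱^B. Then for every q ∈ ℍ_ℂ all of whose components are real and with unit norm: ⟨n_IJ·(Q_L q Q_R)⟩^k = ∑_{i=0}^{k} ∑_{j=0}^{k} G^{ij} · ⟨n_ij·q⟩^k. (These coefficients G^{ij} encode the action of the rotation x ↦ Q_L x Q_R of SO(4) on the basis function Φᵏ_IJ.) -/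

import Mathlib

/-- The scalar product `⟨q·q'⟩ = aa' + bb' + cc' + dd'` of two complex quaternions
(the scalar part of `(q q̄' + q' q̄)/2`). -/
noncomputable def scalProd (q q' : Quaternion ℂ) : ℂ :=
  q.re * q'.re + q.imI * q'.imI + q.imJ * q'.imJ + q.imK * q'.imK

/-- A complex quaternion all of whose four components are real. -/
def IsRealQuat (q : Quaternion ℂ) : Prop :=
  ∃ w x y z : ℝ, q = ⟨(w : ℂ), (x : ℂ), (y : ℂ), (z : ℂ)⟩

/-- `α := 2π/(k+1)`. -/
noncomputable def alphaK (k : ℕ) : ℝ := 2 * Real.pi / (k + 1)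

/-- `ρ := e^{2πi/(k+1)}`, a primitive `(k+1)`-th root of unity. -/
noncomputable def rhoK (k : ℕ) : ℂ := Complex.exp (2 * Real.pi * Complex.I / (k + 1))

/-- The complex quaternion `n_IJ = cos(Iα) + i sin(Jα) j₁ + i cos(Jα) j₂ + sin(Iα) j₃`. -/
noncomputable def nQ (k I J : ℕ) : Quaternion ℂ :=
  ⟨(Real.cos (I * alphaK k) : ℂ), Complex.I * (Real.sin (J * alphaK k) : ℂ),
    Complex.I * (Real.cos (J * alphaK k) : ℂ), (Real.sin (I * alphaK k) : ℂ)⟩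

/-- The auxiliary complex quaternion `a = 1 + i j₃`. -/
noncomputable def qa : Quaternion ℂ := ⟨1, 0, 0, Complex.I⟩
/-- The auxiliary complex quaternion `b = j₁ − i j₂`. -/
noncomputable def qb : Quaternion ℂ := ⟨0, 1, -Complex.I, 0⟩

/-- The coefficients `G^{ij}` encoding the action of the rotation `x ↦ Q_L x Q_R`
on the basis function `Φᵏ_IJ`:
`G^{ij} = ((𝒜')^k/(k+1)²) ∑_{A,B=0}^{k} ρ^{−i(A+B−k)} ρ^{−j(A−B)} 𝒰^A 𝒱^B`. -/
noncomputable def Gcoef (k : ℕ) (A' U V : ℂ) (i j : ℕ) : ℂ :=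
  (A' ^ k / ((k : ℂ) + 1) ^ 2) *
    ∑ A ∈ Finset.range (k + 1), ∑ B ∈ Finset.range (k + 1),
      rhoK k ^ (-(i : ℤ) * ((A : ℤ) + (B : ℤ) - (k : ℤ))) *
        rhoK k ^ (-(j : ℤ) * ((A : ℤ) - (B : ℤ))) * U ^ A * V ^ B

/-!
Moving the rotation onto `n_IJ`, the left side is `⟨q·m⟩^k` with `m = Q̄_L n_IJ Q̄_R` isotropic
(`⟨m·m⟩ = 0`). Expanding `q` in the basis `a, ā, b, d`, whose products with `n_ij` are
`ρ^{±i}, ρ^{±j}`, and using `⟨a·m⟩⟨ā·m⟩ = ⟨b·m⟩⟨d·m⟩`, the left side becomes `(𝒜')^k F(𝒰, 𝒱)`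
with `F(U, V) = (c₁UV + c₂ + c₃U + c₄V)^k`, while `⟨n_ij·q⟩^k = ρ^{-ik} F(ρ^{i+j}, ρ^{i-j})`.
Since `F` has degree at most `k` in each variable, it is recovered from its values on the grid of
`(k+1)`-th roots of unity by discrete Fourier interpolation; for `k` even, `(i, j) ↦ (i + j, i - j)`
permutes `(ℤ/(k+1))²`, so that grid is exactly `{(ρ^{i+j}, ρ^{i-j})}`.
-/

open Finset Polynomial

section Fourier

variable {K : Type*} [Field K] {N : ℕ} [NeZero N] {ψ : AddChar (ZMod N) K}

lemma sum_range_eq_sum_zmod {M : Type*} [AddCommMonoid M] (f : ZMod N → M) :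
    ∑ i ∈ range N, f i = ∑ x : ZMod N, f x :=
  sum_nbij' (fun i => (i : ZMod N)) ZMod.val (by simp) (by simp [ZMod.val_lt])
    (fun i hi => ZMod.val_cast_of_lt (mem_range.mp hi)) (fun x _ => ZMod.natCast_zmod_val x)
    (fun _ _ => rfl)

lemma sum_add_sub_eq_sum {R M : Type*} [CommRing R] [Fintype R] [AddCommMonoid M]
    (h2 : IsUnit (2 : R)) (f : R → R → M) :
    ∑ x, ∑ y, f (x + y) (x - y) = ∑ a, ∑ b, f a b := by
  have hinj : Function.Injective fun p : R × R => (p.1 + p.2, p.1 - p.2) := by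
    rintro ⟨x, y⟩ ⟨x', y'⟩ h
    simp only [Prod.mk.injEq] at h
    obtain ⟨hs, hd⟩ := h
    refine Prod.ext (h2.mul_left_cancel ?_) (h2.mul_left_cancel ?_)
    · linear_combination hs + hd
    · linear_combination hs - hd
  simp only [← Fintype.sum_prod_type']
  exact Fintype.sum_bijective _ (Finite.injective_iff_bijective.mp hinj) _ _ fun _ => rfl

lemma sum_addChar_mul_natCast_sub (hψ : ψ.IsPrimitive) {m A : ℕ} (hm : m < N) (hA : A < N) :
    ∑ a : ZMod N, ψ (a * ((m : ZMod N) - A)) = if m = A then (N : K) else 0 := by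
  have hiff : (m : ZMod N) - A = 0 ↔ m = A := by
    rw [sub_eq_zero, ZMod.natCast_eq_natCast_iff', Nat.mod_eq_of_lt hm, Nat.mod_eq_of_lt hA]
  rw [AddChar.sum_mulShift _ hψ, ZMod.card]
  simp only [hiff, apply_ite (Nat.cast : ℕ → K), Nat.cast_zero]

lemma eval_eq_sum_addChar (hψ : ψ.IsPrimitive) (hN : (N : K) ≠ 0) {p : K[X]}
    (hp : p.natDegree < N) (u : K) :
    p.eval u = (N : K)⁻¹ * ∑ a : ZMod N,
      (∑ A ∈ range N, ψ (-(a * A)) * u ^ A) * p.eval (ψ a) := by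
  have hcoeff : ∀ A ∈ range N, ∑ a : ZMod N, ψ (-(a * A)) * p.eval (ψ a) = N * p.coeff A := by
    intro A hA
    simp_rw [eval_eq_sum_range' hp, mul_sum, ← AddChar.map_nsmul_eq_pow]
    have hterm : ∀ (m : ℕ) (a : ZMod N),
        ψ (-(a * A)) * (p.coeff m * ψ (m • a)) = p.coeff m * ψ (a * ((m : ZMod N) - A)) := by
      intro m a
      rw [mul_left_comm, ← AddChar.map_add_eq_mul, nsmul_eq_mul]
      ring_nf
    simp_rw [hterm]
    rw [sum_comm]
    simp_rw [← mul_sum]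
    rw [sum_congr rfl fun m hm => by
      rw [sum_addChar_mul_natCast_sub hψ (mem_range.mp hm) (mem_range.mp hA)]]
    simp [hA, mul_comm]
  calc p.eval u = ∑ A ∈ range N, (N : K)⁻¹ * (N * p.coeff A) * u ^ A := by
        rw [eval_eq_sum_range' hp]
        exact sum_congr rfl fun A _ => by field_simp
    _ = _ := by
        rw [mul_sum]
        simp_rw [sum_mul, mul_sum]
        rw [sum_comm]
        refine sum_congr rfl fun A hA => ?_
        rw [← hcoeff A hA, mul_sum, sum_mul]
        exact sum_congr rfl fun a _ => by ring

lemma natDegree_linear_pow_lt (a b : K) (k : ℕ) : ((C a * X + C b) ^ k).natDegree < k + 1 :=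
  Nat.lt_succ_of_le ((natDegree_pow_le_of_le k natDegree_linear_le).trans_eq (mul_one k))

lemma linear_comb_pow_eq_sum_grid {k : ℕ} {ψ : AddChar (ZMod (k + 1)) K}
    (hψ : ψ.IsPrimitive) (hN : ((k + 1 : ℕ) : K) ≠ 0) (c₁ c₂ c₃ c₄ U V : K) :
    (c₁ * (U * V) + c₂ + c₃ * U + c₄ * V) ^ k
      = ∑ a : ZMod (k + 1), ∑ b : ZMod (k + 1),
          ((k + 1 : ℕ) : K)⁻¹ * ((k + 1 : ℕ) : K)⁻¹ *
            ((∑ A ∈ range (k + 1), ψ (-(a * A)) * U ^ A) *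
              (∑ B ∈ range (k + 1), ψ (-(b * B)) * V ^ B) *
              (c₁ * (ψ a * ψ b) + c₂ + c₃ * ψ a + c₄ * ψ b) ^ k) := by
  set F : K → K → K := fun U V => (c₁ * (U * V) + c₂ + c₃ * U + c₄ * V) ^ k
  have hU : ∀ U V, F U V = ((C (c₁ * V + c₃) * X + C (c₂ + c₄ * V)) ^ k).eval U := by
    intro U V; simp only [F, eval_pow, eval_add, eval_mul, eval_C, eval_X]; ring
  have hV : ∀ U V, F U V = ((C (c₁ * U + c₄) * X + C (c₂ + c₃ * U)) ^ k).eval V := by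
    intro U V; simp only [F, eval_pow, eval_add, eval_mul, eval_C, eval_X]; ring
  change F U V = ∑ a, ∑ b, _ * (_ * F (ψ a) (ψ b))
  rw [hU, eval_eq_sum_addChar hψ hN (natDegree_linear_pow_lt _ _ k), mul_sum]
  refine sum_congr rfl fun a _ => ?_
  rw [← hU, hV, eval_eq_sum_addChar hψ hN (natDegree_linear_pow_lt _ _ k)]
  simp only [mul_sum univ, ← hV]
  refine sum_congr rfl fun b _ => ?_
  ring

lemma linear_comb_pow_eq_sum_addChar {k : ℕ} {ψ : AddChar (ZMod (k + 1)) K}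
    (hψ : ψ.IsPrimitive) (hN : ((k + 1 : ℕ) : K) ≠ 0) (hk : Even k) (c₁ c₂ c₃ c₄ U V : K) :
    (c₁ * (U * V) + c₂ + c₃ * U + c₄ * V) ^ k
      = ∑ x : ZMod (k + 1), ∑ y : ZMod (k + 1),
          (((k + 1 : ℕ) : K) ^ 2)⁻¹ * (∑ A ∈ range (k + 1), ∑ B ∈ range (k + 1),
            ψ (-x * (A + B - k)) * ψ (-y * (A - B)) * U ^ A * V ^ B)
          * (c₁ * ψ x + c₂ * ψ (-x) + c₃ * ψ y + c₄ * ψ (-y)) ^ k := by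
  have h2 : IsUnit (2 : ZMod (k + 1)) := by
    rw [show (2 : ZMod (k + 1)) = ((2 : ℕ) : ZMod (k + 1)) by norm_num, ZMod.isUnit_iff_coprime,
      Nat.coprime_two_left]
    exact hk.add_one
  rw [linear_comb_pow_eq_sum_grid hψ hN, ← sum_add_sub_eq_sum (M := K) h2]
  refine sum_congr rfl fun x _ => sum_congr rfl fun y _ => ?_
  have hψx : ψ x ≠ 0 := (AddChar.val_isUnit ψ x).ne_zero
  have hψy : ψ y ≠ 0 := (AddChar.val_isUnit ψ y).ne_zero
  have hvalue : c₁ * (ψ (x + y) * ψ (x - y)) + c₂ + c₃ * ψ (x + y) + c₄ * ψ (x - y)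
      = ψ x * (c₁ * ψ x + c₂ * ψ (-x) + c₃ * ψ y + c₄ * ψ (-y)) := by
    simp only [AddChar.map_add_eq_mul, AddChar.map_sub_eq_div, AddChar.map_neg_eq_inv]
    field_simp
  have hphase : ∀ A B : ℕ, ψ (-((x + y) * A)) * ψ (-((x - y) * B)) * ψ x ^ k
      = ψ (-x * (A + B - k)) * ψ (-y * (A - B)) := by
    intro A B
    rw [← AddChar.map_nsmul_eq_pow, nsmul_eq_mul, ← AddChar.map_add_eq_mul,
      ← AddChar.map_add_eq_mul, ← AddChar.map_add_eq_mul]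
    ring_nf
  have hbasis : (∑ A ∈ range (k + 1), ψ (-((x + y) * A)) * U ^ A)
      * (∑ B ∈ range (k + 1), ψ (-((x - y) * B)) * V ^ B) * ψ x ^ k
      = ∑ A ∈ range (k + 1), ∑ B ∈ range (k + 1),
          ψ (-x * (A + B - k)) * ψ (-y * (A - B)) * U ^ A * V ^ B := by
    rw [sum_mul_sum, sum_mul]
    refine sum_congr rfl fun A _ => ?_
    rw [sum_mul]
    refine sum_congr rfl fun B _ => ?_
    rw [← hphase]
    ring
  rw [hvalue, mul_pow, ← hbasis]
  ring

end Fourier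

section Quaternion

open Complex

lemma scalProd_comm (q q' : Quaternion ℂ) : scalProd q q' = scalProd q' q := by
  simp only [scalProd]; ring

lemma scalProd_mul_mul (X u Y n : Quaternion ℂ) :
    scalProd (X * u * Y) n = scalProd u (star X * n * star Y) := by
  simp only [scalProd, Quaternion.re_mul, Quaternion.imI_mul, Quaternion.imJ_mul,
    Quaternion.imK_mul, Quaternion.re_star, Quaternion.imI_star, Quaternion.imJ_star,
    Quaternion.imK_star]
  ring

lemma scalProd_mul_self (p q : Quaternion ℂ) :
    scalProd (p * q) (p * q) = scalProd p p * scalProd q q := by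
  simp only [scalProd, Quaternion.re_mul, Quaternion.imI_mul, Quaternion.imJ_mul,
    Quaternion.imK_mul]
  ring

/-- The complex quaternion `d = −j₁ − i j₂`. -/
noncomputable def qd : Quaternion ℂ := ⟨0, -1, -I, 0⟩

lemma scalProd_qa_mul_star_qa_sub_qb_mul_qd (m : Quaternion ℂ) :
    scalProd qa m * scalProd (star qa) m - scalProd qb m * scalProd qd m = scalProd m m := by
  simp only [scalProd, Quaternion.re_star, Quaternion.imI_star, Quaternion.imJ_star,
    Quaternion.imK_star]
  simp only [qa, qb, qd]
  linear_combination (-(m.imJ ^ 2 + m.imK ^ 2)) * I_mul_I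

lemma scalProd_eq_qa_qb_qd (q m : Quaternion ℂ) :
    scalProd q m = (q.re - I * q.imK) / 2 * scalProd qa m
      + (q.re + I * q.imK) / 2 * scalProd (star qa) m
      + (q.imI + I * q.imJ) / 2 * scalProd qb m + (I * q.imJ - q.imI) / 2 * scalProd qd m := by
  simp only [scalProd, Quaternion.re_star, Quaternion.imI_star, Quaternion.imJ_star,
    Quaternion.imK_star]
  simp only [qa, qb, qd]
  linear_combination (q.imK * m.imK + q.imJ * m.imJ) * I_mul_I

end Quaternion

section BasisQuaternions

open Complex

lemma cexp_mul_alphaK_eq_stdAddChar (k : ℕ) (m : ℤ) :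
    exp (((m * alphaK k : ℝ) : ℂ) * I) = ZMod.stdAddChar (m : ZMod (k + 1)) := by
  rw [ZMod.stdAddChar_coe, alphaK]
  congr 1
  push_cast
  field_simp

lemma rhoK_zpow (k : ℕ) (m : ℤ) : rhoK k ^ m = ZMod.stdAddChar (m : ZMod (k + 1)) := by
  rw [rhoK, ← exp_int_mul, ← cexp_mul_alphaK_eq_stdAddChar, alphaK]
  congr 1
  push_cast
  ring

lemma cos_add_I_mul_sin_eq_stdAddChar (k i : ℕ) :
    (Real.cos (i * alphaK k) : ℂ) + I * Real.sin (i * alphaK k)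
      = ZMod.stdAddChar (i : ZMod (k + 1)) := by
  have h := cexp_mul_alphaK_eq_stdAddChar k i
  simp only [Int.cast_natCast] at h
  rw [← h, exp_mul_I, ← ofReal_cos, ← ofReal_sin]
  ring

lemma cos_sub_I_mul_sin_eq_stdAddChar (k i : ℕ) :
    (Real.cos (i * alphaK k) : ℂ) - I * Real.sin (i * alphaK k)
      = ZMod.stdAddChar (-(i : ZMod (k + 1))) := by
  have h := cexp_mul_alphaK_eq_stdAddChar k (-i)
  simp only [Int.cast_neg, Int.cast_natCast, neg_mul] at h
  rw [← h, exp_mul_I, ← ofReal_cos, ← ofReal_sin, Real.cos_neg, Real.sin_neg, ofReal_neg]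
  ring

lemma scalProd_qa_nQ (k i j : ℕ) :
    scalProd qa (nQ k i j) = ZMod.stdAddChar (i : ZMod (k + 1)) := by
  rw [← cos_add_I_mul_sin_eq_stdAddChar]
  simp only [scalProd, qa, nQ]
  ring

lemma scalProd_star_qa_nQ (k i j : ℕ) :
    scalProd (star qa) (nQ k i j) = ZMod.stdAddChar (-(i : ZMod (k + 1))) := by
  rw [← cos_sub_I_mul_sin_eq_stdAddChar]
  simp only [scalProd, Quaternion.re_star, Quaternion.imI_star, Quaternion.imJ_star,
    Quaternion.imK_star]
  simp only [qa, nQ]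
  ring

lemma scalProd_qb_nQ (k i j : ℕ) :
    scalProd qb (nQ k i j) = ZMod.stdAddChar (j : ZMod (k + 1)) := by
  rw [← cos_add_I_mul_sin_eq_stdAddChar]
  simp only [scalProd, qb, nQ]
  linear_combination (-(Real.cos (j * alphaK k) : ℂ)) * I_mul_I

lemma scalProd_qd_nQ (k i j : ℕ) :
    scalProd qd (nQ k i j) = ZMod.stdAddChar (-(j : ZMod (k + 1))) := by
  rw [← cos_sub_I_mul_sin_eq_stdAddChar]
  simp only [scalProd, qd, nQ]
  linear_combination (-(Real.cos (j * alphaK k) : ℂ)) * I_mul_I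

lemma scalProd_nQ_self (k i j : ℕ) : scalProd (nQ k i j) (nQ k i j) = 0 := by
  have hcs : ∀ θ : ℝ, (Real.cos θ : ℂ) ^ 2 + (Real.sin θ : ℂ) ^ 2 = 1 := fun θ => by
    exact_mod_cast Real.cos_sq_add_sin_sq θ
  simp only [scalProd, nQ]
  linear_combination hcs (i * alphaK k) - hcs (j * alphaK k)
    + ((Real.sin (j * alphaK k) : ℂ) ^ 2 + (Real.cos (j * alphaK k) : ℂ) ^ 2) * I_mul_I

end BasisQuaternions

lemma linear_comb_eq_mul_of_mul_sub_mul_eq_zero {K : Type*} [Field K] {A A' B D : K}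
    (hA' : A' ≠ 0) (hB : B ≠ 0) (h : A * A' - B * D = 0) (c₁ c₂ c₃ c₄ : K) :
    c₁ * A + c₂ * A' + c₃ * B + c₄ * D
      = A' * (c₁ * (B / A' * (A / B)) + c₂ + c₃ * (B / A') + c₄ * (A / B)) := by
  field_simp
  linear_combination (-c₄) * h

lemma Gcoef_eq (k : ℕ) (A' U V : ℂ) (i j : ℕ) :
    Gcoef k A' U V i j = A' ^ k * ((((k + 1 : ℕ) : ℂ) ^ 2)⁻¹ *
      ∑ A ∈ range (k + 1), ∑ B ∈ range (k + 1),
        ZMod.stdAddChar (-(i : ZMod (k + 1)) *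
            ((A : ZMod (k + 1)) + (B : ZMod (k + 1)) - (k : ZMod (k + 1)))) *
          ZMod.stdAddChar (-(j : ZMod (k + 1)) * ((A : ZMod (k + 1)) - (B : ZMod (k + 1))))
            * U ^ A * V ^ B) := by
  simp only [Gcoef, rhoK_zpow]
  push_cast
  ring

theorem rotation_of_basis_functions_general (k : ℕ) (hk : Even k) (I J : Fin (k + 1))
    (QL QR : Quaternion ℂ)
    (hA' : scalProd (QL * star qa * QR) (nQ k I J) ≠ 0)
    (hB : scalProd (QL * qb * QR) (nQ k I J) ≠ 0) :
    ∀ q : Quaternion ℂ, IsRealQuat q → scalProd q q = 1 →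
      scalProd (nQ k I J) (QL * q * QR) ^ k
        = ∑ i ∈ Finset.range (k + 1), ∑ j ∈ Finset.range (k + 1),
            Gcoef k (scalProd (QL * star qa * QR) (nQ k I J))
              (scalProd (QL * qb * QR) (nQ k I J) /
                scalProd (QL * star qa * QR) (nQ k I J))
              (scalProd (QL * qa * QR) (nQ k I J) /
                scalProd (QL * qb * QR) (nQ k I J)) i j
            * scalProd (nQ k i j) q ^ k := by
  intro q _ _
  rw [scalProd_comm (nQ k I J)]
  simp only [scalProd_mul_mul] at hA' hB ⊢
  set m := star QL * nQ k I J * star QR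
  have hnull : scalProd m m = 0 := by
    rw [scalProd_mul_self, scalProd_mul_self, scalProd_nQ_self, mul_zero, zero_mul]
  have hrel := scalProd_qa_mul_star_qa_sub_qb_mul_qd m
  rw [hnull] at hrel
  have hN : ((k + 1 : ℕ) : ℂ) ≠ 0 := Nat.cast_ne_zero.mpr k.succ_ne_zero
  rw [scalProd_eq_qa_qb_qd q m,
    linear_comb_eq_mul_of_mul_sub_mul_eq_zero hA' hB hrel, mul_pow,
    linear_comb_pow_eq_sum_addChar (ZMod.isPrimitive_stdAddChar _) hN hk]
  simp_rw [mul_sum univ, ← sum_range_eq_sum_zmod]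
  refine sum_congr rfl fun i _ => sum_congr rfl fun j _ => ?_
  rw [Gcoef_eq, scalProd_comm (nQ k i j), scalProd_eq_qa_qb_qd q, scalProd_qa_nQ,
    scalProd_star_qa_nQ, scalProd_qb_nQ, scalProd_qd_nQ]
  ring

/-- Rotation of the basis functions of `𝒱ᵏ`: for a rotation `(Q_L,Q_R)` of SO(4) with
`𝒜' ≠ 0` and `ℬ ≠ 0`, and every unit quaternion `q` with real components,
`⟨n_IJ·(Q_L q Q_R)⟩^k = ∑_{i,j=0}^{k} G^{ij} ⟨n_ij·q⟩^k`, where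
`𝒰 = ℬ/𝒜'` and `𝒱 = 𝒜/ℬ`. -/
theorem rotation_of_basis_functions (k : ℕ) (hk : Even k) (I J : Fin (k + 1))
    (QL QR : Quaternion ℂ) (hQL : IsRealQuat QL) (hQR : IsRealQuat QR)
    (hQLnorm : scalProd QL QL = 1) (hQRnorm : scalProd QR QR = 1)
    (hA' : scalProd (QL * star qa * QR) (nQ k I J) ≠ 0)
    (hB : scalProd (QL * qb * QR) (nQ k I J) ≠ 0) :
    ∀ q : Quaternion ℂ, IsRealQuat q → scalProd q q = 1 →
      scalProd (nQ k I J) (QL * q * QR) ^ k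
        = ∑ i ∈ Finset.range (k + 1), ∑ j ∈ Finset.range (k + 1),
            Gcoef k (scalProd (QL * star qa * QR) (nQ k I J))
              (scalProd (QL * qb * QR) (nQ k I J) /
                scalProd (QL * star qa * QR) (nQ k I J))
              (scalProd (QL * qa * QR) (nQ k I J) /
                scalProd (QL * qb * QR) (nQ k I J)) i j
            * scalProd (nQ k i j) q ^ k :=
  rotation_of_basis_functions_general k hk I J QL QR hA' hB
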